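/- Let G and H be connected graphs of order at least two. Then sdim_f(G □ H) ≥ 2 · ν(G_SR) · ν(H_SR), where ν denotes the matching number. -/

import Mathlib

open SimpleGraph

/-- `Sset G x y` is the set `S{x,y}` of vertices `z` such that `x` lies on some shortest
`y`–`z` path or `y` lies on some shortest `x`–`z` path in `G`. -/
def Sset {V : Type*} (G : SimpleGraph V) (x y : V) : Set V :=
  {z | (∃ p : G.Walk y z, p.length = G.dist y z ∧ x ∈ p.support) ∨
       (∃ p : G.Walk x z, p.length = G.dist x z ∧ y ∈ p.support)}

/-- A strong resolving function of `G`: `g : V → [0,1]` with `g(S{x,y}) ≥ 1` for all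
distinct vertices `x, y`. -/
def IsSRF {V : Type*} (G : SimpleGraph V) (g : V → ℝ) : Prop :=
  (∀ v, 0 ≤ g v ∧ g v ≤ 1) ∧ ∀ x y : V, x ≠ y → 1 ≤ ∑ᶠ z ∈ Sset G x y, g z

/-- The fractional strong metric dimension of `G`. -/
noncomputable def sdimf {V : Type*} (G : SimpleGraph V) : ℝ :=
  sInf {s : ℝ | ∃ g : V → ℝ, IsSRF G g ∧ s = ∑ᶠ v, g v}

/-- A strong resolving set of `G`: every pair of distinct vertices is strongly resolved
by some vertex of `S` (i.e. some vertex of `S` lies in `S{x,y}`). -/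
def IsSRSet {V : Type*} (G : SimpleGraph V) (S : Set V) : Prop :=
  ∀ x y : V, x ≠ y → ∃ z ∈ S, z ∈ Sset G x y

/-- The strong metric dimension of `G`: the minimum cardinality of a strong resolving set. -/
noncomputable def sdim {V : Type*} (G : SimpleGraph V) : ℕ :=
  sInf {n : ℕ | ∃ S : Set V, IsSRSet G S ∧ S.ncard = n}

/-- `u` is maximally distant from `v`: `d(u,v) ≥ d(w,v)` for every neighbor `w` of `u`. -/
def MaxDistFrom {V : Type*} (G : SimpleGraph V) (u v : V) : Prop :=
  ∀ w : V, G.Adj u w → G.dist w v ≤ G.dist u v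

/-- `u` and `v` are mutually maximally distant (MMD) in `G`. -/
def MMD {V : Type*} (G : SimpleGraph V) (u v : V) : Prop :=
  u ≠ v ∧ MaxDistFrom G u v ∧ MaxDistFrom G v u

/-- The strong resolving graph of `G` (on the ambient vertex set): `u ~ v` iff `u` MMD `v`. -/
def SRGraph {V : Type*} (G : SimpleGraph V) : SimpleGraph V where
  Adj := MMD G
  symm := ⟨fun _ _ h => ⟨h.1.symm, h.2.2, h.2.1⟩⟩
  loopless := ⟨fun _ h => h.1 rfl⟩

/-- `M(G)`: the set of vertices that are mutually maximally distant with some vertex. -/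
def Mset {V : Type*} (G : SimpleGraph V) : Set V := {x | ∃ y, MMD G x y}

/-- The matching number of `G`. -/
noncomputable def matchNum {V : Type*} (G : SimpleGraph V) : ℕ :=
  sSup {n : ℕ | ∃ M : G.Subgraph, M.IsMatching ∧ M.edgeSet.ncard = n}

/-- The corona product `G ⊙ H`. -/
def corona {V W : Type*} (G : SimpleGraph V) (H : SimpleGraph W) :
    SimpleGraph (V ⊕ V × W) where
  Adj x y :=
    match x, y with
    | Sum.inl u, Sum.inl u' => G.Adj u u'
    | Sum.inl u, Sum.inr iw => u = iw.1
    | Sum.inr iw, Sum.inl u => iw.1 = u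
    | Sum.inr iw, Sum.inr iw' => iw.1 = iw'.1 ∧ H.Adj iw.2 iw'.2
  symm := by
    constructor
    rintro (u | iw) (u' | iw') h
    · exact G.symm.symm _ _ h
    · exact h.symm
    · exact h.symm
    · exact ⟨h.1.symm, H.symm.symm _ _ h.2⟩
  loopless := by
    constructor
    rintro (u | iw) h
    · exact G.loopless.irrefl u h
    · exact H.loopless.irrefl iw.2 h.2

/-- `K₁ ⊙ H`: the graph obtained from `H` by adding one new vertex adjacent to every
vertex of `H`. -/
def cone {W : Type*} (H : SimpleGraph W) : SimpleGraph (Option W) where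
  Adj x y :=
    match x, y with
    | none, none => False
    | none, some _ => True
    | some _, none => True
    | some w, some w' => H.Adj w w'
  symm := by
    constructor
    rintro (_ | w) (_ | w') h
    · exact h
    · exact trivial
    · exact trivial
    · exact H.symm.symm _ _ h
  loopless := by
    constructor
    rintro (_ | w) h
    · exact h
    · exact H.loopless.irrefl w h

/-- The lexicographic product `G[H]`. -/
def lexProd {V W : Type*} (G : SimpleGraph V) (H : SimpleGraph W) :
    SimpleGraph (V × W) where
  Adj x y := G.Adj x.1 y.1 ∨ (x.1 = y.1 ∧ H.Adj x.2 y.2)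
  symm := by
    constructor
    rintro x y (h | ⟨h1, h2⟩)
    · exact Or.inl (G.symm.symm _ _ h)
    · exact Or.inr ⟨h1.symm, H.symm.symm _ _ h2⟩
  loopless := by
    constructor
    rintro x (h | ⟨_, h2⟩)
    · exact G.loopless.irrefl x.1 h
    · exact H.loopless.irrefl x.2 h2

/-- `SL{x,y} = (N[x] ∪ N[y]) ∩ S{x,y}`. -/
def SLset {W : Type*} (H : SimpleGraph W) (x y : W) : Set W :=
  (insert x (H.neighborSet x) ∪ insert y (H.neighborSet y)) ∩ Sset H x y

/-- A strong locating function of `H`. -/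
def IsSLF {W : Type*} (H : SimpleGraph W) (f : W → ℝ) : Prop :=
  (∀ v, 0 ≤ f v ∧ f v ≤ 1) ∧ ∀ x y : W, x ≠ y → 1 ≤ ∑ᶠ z ∈ SLset H x y, f z

/-- `sl_f(H)`: the minimum weight of a strong locating function of `H`. -/
noncomputable def slf {W : Type*} (H : SimpleGraph W) : ℝ :=
  sInf {s : ℝ | ∃ f : W → ℝ, IsSLF H f ∧ s = ∑ᶠ v, f v}

/-- `u` has a true twin: some other vertex with the same closed neighborhood. -/
def HasTrueTwin {V : Type*} (G : SimpleGraph V) (u : V) : Prop :=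
  ∃ v : V, v ≠ u ∧ insert v (G.neighborSet v) = insert u (G.neighborSet u)

/-- `u` has a false twin: some other vertex with the same open neighborhood. -/
def HasFalseTwin {V : Type*} (G : SimpleGraph V) (u : V) : Prop :=
  ∃ v : V, v ≠ u ∧ G.neighborSet v = G.neighborSet u

/-- `m₁(G)`: number of vertices in type-1 (singleton) classes of the twin relation. -/
noncomputable def m1 {V : Type*} (G : SimpleGraph V) : ℕ :=
  {u : V | ¬ HasTrueTwin G u ∧ ¬ HasFalseTwin G u}.ncard

/-- `m₂(G)`: number of vertices in type-2 (clique) classes of the twin relation. -/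
noncomputable def m2 {V : Type*} (G : SimpleGraph V) : ℕ :=
  {u : V | HasTrueTwin G u}.ncard

/-- `m₃(G)`: number of vertices in type-3 (independent set) classes of the twin relation. -/
noncomputable def m3 {V : Type*} (G : SimpleGraph V) : ℕ :=
  {u : V | HasFalseTwin G u}.ncard

/-- The strong resolving graph of `G` (whose vertex set is `M(G)`) is Hamiltonian:
there is a cycle in `SRGraph G` passing through every vertex of `M(G)`. -/
def SRHamiltonian {V : Type*} (G : SimpleGraph V) : Prop :=
  ∃ (u : V) (p : (SRGraph G).Walk u u), p.IsCycle ∧ ∀ v ∈ Mset G, v ∈ p.support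

/-!
Distances add in `G □ H`, so if `a, a'` are mutually maximally distant in `G` and `b, b'` in `H`,
then `(a, b)` and `(a', b')` are mutually maximally distant in `G □ H`. For such a pair `x, y`
no shortest path from `y` can pass through `x` without ending there, so `S{x,y} = {x, y}` and every
strong resolving function `g` has `g x + g y ≥ 1`. Take maximum matchings `M` of `G_SR` and `N`
of `H_SR` and pair each `(a, b) ∈ V(M) × V(N)` with the pair of its matching partners: summing
over this involution gives `2 g(V(M) × V(N)) ≥ |V(M)| |V(N)| = 4 ν(G_SR) ν(H_SR)`.
-/

lemma Finset.card_le_two_mul_sum_of_involution {α R : Type*} [Semiring R] [PartialOrder R]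
    [IsOrderedRing R] {s : Finset α} {g : α → R} (φ : α → α) (hφs : ∀ a ∈ s, φ a ∈ s)
    (hφφ : ∀ a ∈ s, φ (φ a) = a) (h : ∀ a ∈ s, 1 ≤ g a + g (φ a)) :
    (s.card : R) ≤ 2 * ∑ a ∈ s, g a :=
  calc (s.card : R) = ∑ _a ∈ s, 1 := by simp
    _ ≤ ∑ a ∈ s, (g a + g (φ a)) := Finset.sum_le_sum h
    _ = 2 * ∑ a ∈ s, g a := by
      rw [Finset.sum_add_distrib, Finset.sum_nbij' φ φ hφs hφs hφφ hφφ fun _ _ => rfl, two_mul]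

namespace SimpleGraph

variable {V W : Type*} {G : SimpleGraph V} {H : SimpleGraph W}

lemma dist_boxProd {x y : V × W} (hG : G.Reachable x.1 y.1) (hH : H.Reachable x.2 y.2) :
    (G □ H).dist x y = G.dist x.1 y.1 + H.dist x.2 y.2 := by
  rw [dist, dist, dist, edist_boxProd,
    ENat.toNat_add (edist_ne_top_iff_reachable.2 hG) (edist_ne_top_iff_reachable.2 hH)]

namespace Subgraph.IsMatching

variable {M : G.Subgraph}

lemma ncard_verts [Finite V] (hM : M.IsMatching) : M.verts.ncard = 2 * M.edgeSet.ncard := by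
  have hfiber : ∀ e, Nat.card {v // hM.toEdge v = e} = 2 := by
    rintro ⟨e, he⟩
    induction e using Sym2.ind with
    | _ u v =>
      change Nat.card ↥(hM.toEdge ⁻¹' {⟨s(u, v), he⟩}) = 2
      rw [Nat.card_coe_set_eq, hM.toEdge_preimage_singleton he, Set.ncard_pair]
      simpa using (M.adj_sub he).ne
  rw [← Nat.card_coe_set_eq, ← Nat.card_coe_set_eq,
    ← Nat.card_congr (Equiv.sigmaFiberEquiv hM.toEdge)]
  have := Fintype.ofFinite M.edgeSet
  rw [Nat.card_sigma, Finset.sum_congr rfl fun e _ => hfiber e]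
  simp [mul_comm]

open Classical in
noncomputable def partner (hM : M.IsMatching) (v : V) : V :=
  if hv : v ∈ M.verts then (hM hv).choose else v

lemma adj_partner (hM : M.IsMatching) {v : V} (hv : v ∈ M.verts) : M.Adj v (hM.partner v) := by
  rw [partner, dif_pos hv]
  exact (hM hv).choose_spec.1

lemma partner_partner (hM : M.IsMatching) {v : V} (hv : v ∈ M.verts) :
    hM.partner (hM.partner v) = v :=
  let hpv := (hM.adj_partner hv).snd_mem
  hM.eq_of_adj_left (hM.adj_partner hpv) (hM.adj_partner hv).symm

end Subgraph.IsMatching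

end SimpleGraph

lemma exists_isMatching_ncard_edgeSet_eq_matchNum {V : Type*} [Finite V] (G : SimpleGraph V) :
    ∃ M : G.Subgraph, M.IsMatching ∧ M.edgeSet.ncard = matchNum G := by
  let sizes := {n | ∃ M : G.Subgraph, M.IsMatching ∧ M.edgeSet.ncard = n}
  have hne : sizes.Nonempty := ⟨0, ⊥, fun _ hv => hv.elim, by simp⟩
  have hbdd : BddAbove sizes :=
    ⟨Nat.card (Sym2 V), by rintro _ ⟨M, -, rfl⟩; exact Set.ncard_le_card _⟩
  exact Nat.sSup_mem hne hbdd

section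

variable {V W : Type*} {G : SimpleGraph V} {H : SimpleGraph W}

lemma MaxDistFrom.boxProd (hG : G.Connected) (hH : H.Connected) {u v : V} {x y : W}
    (hu : MaxDistFrom G u v) (hx : MaxDistFrom H x y) :
    MaxDistFrom (G □ H) (u, x) (v, y) := by
  intro w hw
  rw [dist_boxProd (hG.preconnected _ _) (hH.preconnected _ _),
    dist_boxProd (hG.preconnected _ _) (hH.preconnected _ _)]
  rcases boxProd_adj.mp hw with ⟨hadj, rfl⟩ | ⟨hadj, rfl⟩
  · exact Nat.add_le_add_right (hu _ hadj) _
  · exact Nat.add_le_add_left (hx _ hadj) _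

lemma MMD.boxProd (hG : G.Connected) (hH : H.Connected) {u v : V} {x y : W}
    (huv : MMD G u v) (hxy : MMD H x y) : MMD (G □ H) (u, x) (v, y) :=
  ⟨fun h => huv.1 (congrArg Prod.fst h), huv.2.1.boxProd hG hH hxy.2.1,
    huv.2.2.boxProd hG hH hxy.2.2⟩

/-- A step of the walk beyond `a` would reach a neighbour of `a` farther from `b` than `a`. -/
lemma MaxDistFrom.eq_of_mem_support (hG : G.Connected) {a b z : V} (ha : MaxDistFrom G a b)
    (p : G.Walk b z) (hp : p.length = G.dist b z) (hap : a ∈ p.support) : z = a := by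
  classical
  have hsplit := congrArg Walk.length (p.take_spec hap)
  rw [Walk.length_append] at hsplit
  have htake : G.dist a b ≤ (p.takeUntil a hap).length := dist_comm (G := G) ▸ dist_le _
  generalize p.dropUntil a hap = r at hsplit
  cases r with
  | nil => rfl
  | @cons _ c _ hac r =>
    have hfar : G.dist b z ≤ G.dist a b + r.length :=
      calc G.dist b z ≤ G.dist b c + G.dist c z := hG.dist_triangle
        _ = G.dist c b + G.dist c z := by rw [dist_comm]
        _ ≤ G.dist a b + r.length := add_le_add (ha c hac) (dist_le r)
    rw [Walk.length_cons] at hsplit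
    omega

lemma left_mem_Sset {x y : V} (h : G.Reachable y x) : x ∈ Sset G x y :=
  let ⟨p, hp⟩ := h.exists_walk_length_eq_dist
  Or.inl ⟨p, hp, p.end_mem_support⟩

lemma Sset_comm (x y : V) : Sset G x y = Sset G y x :=
  Set.ext fun _ => or_comm

lemma MMD.Sset_eq_pair (hG : G.Connected) {a b : V} (h : MMD G a b) : Sset G a b = {a, b} := by
  refine Set.Subset.antisymm ?_ ?_
  · rintro z (⟨p, hp, hap⟩ | ⟨p, hp, hbp⟩)
    · exact Or.inl (h.2.1.eq_of_mem_support hG p hp hap)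
    · exact Or.inr (h.2.2.eq_of_mem_support hG p hp hbp)
  · rintro z (rfl | rfl)
    · exact left_mem_Sset (hG.preconnected _ _)
    · exact Sset_comm (G := G) z a ▸ left_mem_Sset (hG.preconnected _ _)

lemma IsSRF.one_le_add_of_MMD {g : V → ℝ} (hg : IsSRF G g) (hG : G.Connected) {a b : V}
    (h : MMD G a b) : 1 ≤ g a + g b := by
  have := hg.2 a b h.1
  rwa [h.Sset_eq_pair hG, finsum_mem_pair h.1] at this

lemma isSRF_one [Finite V] (hG : G.Connected) : IsSRF G (fun _ => 1) := by
  refine ⟨fun _ => ⟨zero_le_one, le_rfl⟩, fun x y _ => ?_⟩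
  have hcard := Nat.cast_finsum_mem (M := ℝ) (Sset G x y).toFinite fun _ => 1
  rw [finsum_one, Nat.cast_one] at hcard
  rw [← hcard, Nat.one_le_cast, Nat.one_le_iff_ne_zero, Ne, Set.ncard_eq_zero]
  exact Set.Nonempty.ne_empty ⟨x, left_mem_Sset (hG.preconnected y x)⟩

lemma le_sdimf [Finite V] (hG : G.Connected) {c : ℝ} (h : ∀ g, IsSRF G g → c ≤ ∑ᶠ v, g v) :
    c ≤ sdimf G :=
  le_csInf ⟨_, _, isSRF_one hG, rfl⟩ fun _ ⟨g, hg, hs⟩ => hs ▸ h g hg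

lemma IsSRF.ncard_mul_ncard_le_two_mul_finsum [Finite V] [Finite W] (hG : G.Connected)
    (hH : H.Connected) {M : (SRGraph G).Subgraph} {N : (SRGraph H).Subgraph} (hM : M.IsMatching) (hN : N.IsMatching) {g : V × W → ℝ}
    (hg : IsSRF (G □ H) g) : (M.verts.ncard * N.verts.ncard : ℝ) ≤ 2 * ∑ᶠ p, g p := by
  classical
  have := Fintype.ofFinite V
  have := Fintype.ofFinite W
  let A := M.verts.toFinset ×ˢ N.verts.toFinset
  have hA : (A.card : ℝ) ≤ 2 * ∑ p ∈ A, g p := by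
    refine Finset.card_le_two_mul_sum_of_involution (fun p => (hM.partner p.1, hN.partner p.2))
      ?_ ?_ ?_ <;> simp only [A, Finset.mem_product, Set.mem_toFinset] <;> rintro ⟨a, b⟩ ⟨ha, hb⟩
    · exact ⟨(hM.adj_partner ha).snd_mem, (hN.adj_partner hb).snd_mem⟩
    · rw [hM.partner_partner ha, hN.partner_partner hb]
    · exact hg.one_le_add_of_MMD (hG.boxProd hH)
        ((M.adj_sub (hM.adj_partner ha)).boxProd hG hH (N.adj_sub (hN.adj_partner hb)))
  have hsub : ∑ p ∈ A, g p ≤ ∑ᶠ p, g p := by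
    rw [finsum_eq_sum_of_fintype]
    exact Finset.sum_le_sum_of_subset_of_nonneg (Finset.subset_univ A) fun p _ _ => (hg.1 p).1
  have hAcard : (A.card : ℝ) = M.verts.ncard * N.verts.ncard := by
    simp [A, Set.ncard_eq_toFinset_card']
  linarith

end

theorem sdimf_boxProd_ge_two_mul_matchNums_general {V W : Type*} [Fintype V] [Fintype W]
    (G : SimpleGraph V) (H : SimpleGraph W)
    (hG : G.Connected) (hH : H.Connected) :
    2 * (matchNum (SRGraph G) : ℝ) * (matchNum (SRGraph H) : ℝ)
      ≤ sdimf (G.boxProd H) := by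
  obtain ⟨M, hM, hMν⟩ := exists_isMatching_ncard_edgeSet_eq_matchNum (SRGraph G)
  obtain ⟨N, hN, hNν⟩ := exists_isMatching_ncard_edgeSet_eq_matchNum (SRGraph H)
  refine le_sdimf (hG.boxProd hH) fun g hg => ?_
  have hweight := hg.ncard_mul_ncard_le_two_mul_finsum hG hH hM hN
  rw [hM.ncard_verts, hN.ncard_verts, hMν, hNν] at hweight
  push_cast at hweight
  linarith

/-- Let `G` and `H` be connected graphs of order at least two. Then
`sdim_f(G □ H) ≥ 2·ν(G_SR)·ν(H_SR)`. -/
theorem sdimf_boxProd_ge_two_mul_matchNums {V W : Type*} [Fintype V] [Fintype W]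
    (G : SimpleGraph V) (H : SimpleGraph W)
    (hG : G.Connected) (hH : H.Connected)
    (hn : 2 ≤ Fintype.card V) (hm : 2 ≤ Fintype.card W) :
    2 * (matchNum (SRGraph G) : ℝ) * (matchNum (SRGraph H) : ℝ)
      ≤ sdimf (G.boxProd H) :=
  sdimf_boxProd_ge_two_mul_matchNums_general G H hG hH
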